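/- If a 3SAT formula has a satisfying assignment, then the reduced auto-bidding market has an equilibrium of revenue exactly 0.075 + m: set α = 5 for the variable bidder corresponding to the true literal of each variable and α = 1 for the false one, and α = 1 for all clause bidders 3^c, 4^c, 5^c; then each 'true' variable bidder wins both of its variable goods at total price 0.075/n, each bidder 3^c wins good 3^c at price 0.5 (since some true literal's bidder bids 5 · 0.1 = 0.5 on good 3^c), goods 4^c are split between 4^c and 5^c at price 0.5, all ROI constraints are binding, and total revenue is n·(0.075/n) + m·0.5 + m·0.5 = 0.075 + m. -/

import Mathlib

/-- Auto-bidding equilibrium over arbitrary finite sets of bidders and goods. -/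
structure ABEquilibrium {ι γ : Type} [Fintype ι] [Fintype γ] (A : ℝ) (v : ι → γ → ℝ)
    (α : ι → ℝ) (x : ι → γ → ℝ) (p : γ → ℝ) : Prop where
  mult_lb : ∀ i, 1 ≤ α i
  mult_ub : ∀ i, α i ≤ A
  alloc_nonneg : ∀ i j, 0 ≤ x i j
  alloc_le_one : ∀ i j, x i j ≤ 1
  highest : ∀ i j, 0 < x i j → ∀ k, α k * v k j ≤ α i * v i j
  second_price : ∀ i j, 0 < x i j →
    p j = sSup (insert 0 {b | ∃ k, k ≠ i ∧ b = α k * v k j})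
  full_alloc : ∀ j, ∑ i, x i j = 1
  roi : ∀ i, ∑ j, x i j * p j ≤ ∑ j, x i j * v i j
  maximal : ∀ i, α i ≠ A → ∑ j, x i j * p j = ∑ j, x i j * v i j

/-- Bidders of the 3SAT reduction. -/
abbrev RedBidder (nv mc : ℕ) := (Fin nv × Bool) ⊕ (Fin mc × Fin 3)

/-- Goods of the 3SAT reduction. -/
abbrev RedGood (nv mc : ℕ) := (Fin nv × Bool) ⊕ (Fin mc × Fin 2)

/-- Valuations of the 3SAT reduction. -/
noncomputable def redval (nv mc : ℕ) (C : Fin mc → Fin 3 → Fin nv × Bool) :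
    RedBidder nv mc → RedGood nv mc → ℝ
  | Sum.inl (j, b), Sum.inl (j', b') =>
      if j = j' then (if b = b' then 0.05 / nv else 0.025 / nv) else 0
  | Sum.inl (j, b), Sum.inr (c, g) =>
      if g = 0 ∧ ∃ t, C c t = (j, b) then 0.1 else 0
  | Sum.inr _, Sum.inl _ => 0
  | Sum.inr (c, t), Sum.inr (c', g) =>
      if c = c' then
        if t = 0 then (if g = 0 then 0.5 else 0.1)
        else (if g = 1 then 0.5 else 0)
      else 0


/-- The multipliers induced by a satisfying assignment `σ`: `5` for the variable bidder of the
true literal of each variable, `1` for the false one, and `1` for all clause bidders. -/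
noncomputable def redmult (nv mc : ℕ) (σ : Fin nv → Bool) : RedBidder nv mc → ℝ
  | Sum.inl (j, s) => if σ j = s then 5 else 1
  | Sum.inr _ => 1


/-! The assignment `σ` prices every good at the highest competing bid and gives it to a bidder
whose bid meets that price. The bidder of the false literal of `x_j` sets the prices `0.025/n`
and `0.05/n` of the two variable goods of `x_j`; in each clause some true literal's bidder bids
`5 · 0.1 = 0.5` on good `3^c`; bidders `4^c` and `5^c` bid `0.5` against each other on `4^c`.
Every winner pays exactly its value of what it wins, so all ROI constraints bind, which gives
ROI feasibility and maximal pacing at once; the prices add up to `n · 0.075/n + m · (0.5 + 0.5)`.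

In `RedBidder` and `RedGood`, `(j, b)` is the literal `x_j` if `b` and `¬x_j` otherwise, clause
bidders `(c, 0), (c, 1), (c, 2)` are `3^c, 4^c, 5^c`, and clause goods `(c, 0), (c, 1)` are
`3^c, 4^c`. -/

section SecondPrice

variable {ι γ : Type}

structure WinsAtSecondPrice (v : ι → γ → ℝ) (α : ι → ℝ) (p : γ → ℝ) (i : ι) (j : γ) :
    Prop where
  bid_le_price : ∀ k, k ≠ i → α k * v k j ≤ p j
  exists_bid_eq_price : ∃ k, k ≠ i ∧ α k * v k j = p j
  price_le_bid : p j ≤ α i * v i j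

namespace WinsAtSecondPrice

variable {v : ι → γ → ℝ} {α : ι → ℝ} {p : γ → ℝ} {i : ι} {j : γ}

theorem bid_le (h : WinsAtSecondPrice v α p i j) (k : ι) : α k * v k j ≤ α i * v i j := by
  by_cases hk : k = i
  · rw [hk]
  · exact (h.bid_le_price k hk).trans h.price_le_bid

theorem price_eq_sSup (h : WinsAtSecondPrice v α p i j) (hp : 0 ≤ p j) :
    p j = sSup (insert 0 {b | ∃ k, k ≠ i ∧ b = α k * v k j}) := by
  obtain ⟨k, hki, hk⟩ := h.exists_bid_eq_price
  symm
  refine IsGreatest.csSup_eq ⟨Set.mem_insert_of_mem _ ⟨k, hki, hk.symm⟩, ?_⟩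
  rintro b (rfl | ⟨k, hk, rfl⟩)
  exacts [hp, h.bid_le_price k hk]

end WinsAtSecondPrice

theorem ABEquilibrium.of_winsAtSecondPrice [Fintype ι] [Fintype γ] {A : ℝ}
    {v : ι → γ → ℝ} {α : ι → ℝ} {x : ι → γ → ℝ} {p : γ → ℝ}
    (hα_ge : ∀ i, 1 ≤ α i) (hα_le : ∀ i, α i ≤ A)
    (hx_nonneg : ∀ i j, 0 ≤ x i j) (hx_le : ∀ i j, x i j ≤ 1) (hx_sum : ∀ j, ∑ i, x i j = 1)
    (hp : ∀ j, 0 ≤ p j) (hwin : ∀ i j, 0 < x i j → WinsAtSecondPrice v α p i j)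
    (hbind : ∀ i, ∑ j, x i j * p j = ∑ j, x i j * v i j) :
    ABEquilibrium A v α x p where
  mult_lb := hα_ge
  mult_ub := hα_le
  alloc_nonneg := hx_nonneg
  alloc_le_one := hx_le
  highest i j hx := (hwin i j hx).bid_le
  second_price i j hx := (hwin i j hx).price_eq_sSup (hp j)
  full_alloc := hx_sum
  roi i := (hbind i).le
  maximal i _ := hbind i

end SecondPrice

section Reduction

noncomputable def redalloc (nv mc : ℕ) (σ : Fin nv → Bool) :
    RedBidder nv mc → RedGood nv mc → ℝ
  | Sum.inl (j, b), Sum.inl (j', _) => if j = j' ∧ σ j = b then 1 else 0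
  | Sum.inl _, Sum.inr _ => 0
  | Sum.inr _, Sum.inl _ => 0
  | Sum.inr (c, t), Sum.inr (c', g) =>
      if c = c' then
        if t = 0 then (if g = 0 then 1 else 0) else (if g = 1 then 1 / 2 else 0)
      else 0

noncomputable def redprice (nv mc : ℕ) (σ : Fin nv → Bool) : RedGood nv mc → ℝ
  | Sum.inl (j, b) => if σ j = b then 0.025 / nv else 0.05 / nv
  | Sum.inr _ => 0.5

variable {nv mc : ℕ} (C : Fin mc → Fin 3 → Fin nv × Bool) (σ : Fin nv → Bool)

theorem one_le_redmult (i : RedBidder nv mc) : 1 ≤ redmult nv mc σ i := by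
  rcases i with ⟨j, b⟩ | _ <;> simp only [redmult] <;> (try split_ifs) <;> norm_num

theorem redmult_le_five (i : RedBidder nv mc) : redmult nv mc σ i ≤ 5 := by
  rcases i with ⟨j, b⟩ | _ <;> simp only [redmult] <;> (try split_ifs) <;> norm_num

theorem redalloc_nonneg (i : RedBidder nv mc) (g : RedGood nv mc) :
    0 ≤ redalloc nv mc σ i g := by
  rcases i with ⟨j, b⟩ | ⟨c, t⟩ <;> rcases g with ⟨j', b'⟩ | ⟨c', g⟩ <;>
    simp only [redalloc] <;> (try split_ifs) <;> norm_num

theorem redalloc_le_one (i : RedBidder nv mc) (g : RedGood nv mc) :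
    redalloc nv mc σ i g ≤ 1 := by
  rcases i with ⟨j, b⟩ | ⟨c, t⟩ <;> rcases g with ⟨j', b'⟩ | ⟨c', g⟩ <;>
    simp only [redalloc] <;> (try split_ifs) <;> norm_num

theorem sum_redalloc (g : RedGood nv mc) : ∑ i, redalloc nv mc σ i g = 1 := by
  rcases g with ⟨j, b⟩ | ⟨c, g⟩
  · rw [Finset.sum_eq_single (Sum.inl (j, σ j))]
    · simp [redalloc]
    · rintro (⟨j', b'⟩ | _) - hne <;> simp only [redalloc]
      rw [if_neg]
      rintro ⟨rfl, rfl⟩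
      exact hne rfl
    · simp
  · rw [Fintype.sum_sum_type, Fintype.sum_prod_type, Fintype.sum_prod_type]
    fin_cases g <;> norm_num [redalloc, Fin.sum_univ_three, show (2 : Fin 3) ≠ 0 by decide]

theorem redprice_nonneg (g : RedGood nv mc) : 0 ≤ redprice nv mc σ g := by
  rcases g with ⟨j, b⟩ | _ <;> simp only [redprice] <;> (try split_ifs) <;> positivity

theorem redmult_mul_redval_false_literal (j : Fin nv) (b : Bool) :
    redmult nv mc σ (Sum.inl (j, !σ j)) * redval nv mc C (Sum.inl (j, !σ j)) (Sum.inl (j, b)) =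
      redprice nv mc σ (Sum.inl (j, b)) := by
  cases b <;> cases h : σ j <;> simp [redmult, redval, redprice, h]

theorem redmult_mul_redval_inl_le_redprice {k : RedBidder nv mc} {j : Fin nv}
    (hk : k ≠ Sum.inl (j, σ j)) (b : Bool) :
    redmult nv mc σ k * redval nv mc C k (Sum.inl (j, b)) ≤ redprice nv mc σ (Sum.inl (j, b)) := by
  rcases k with ⟨j', b'⟩ | _
  · by_cases hj : j' = j
    · subst hj
      obtain rfl : b' = !σ j' := by
        cases b' <;> cases h : σ j' <;> simp_all
      exact (redmult_mul_redval_false_literal C σ j' b).le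
    · simpa [redval, hj] using redprice_nonneg σ _
  · simpa [redval] using redprice_nonneg σ _

theorem redmult_mul_redval_inr_le_half (k : RedBidder nv mc) (c : Fin mc) (g : Fin 2) :
    redmult nv mc σ k * redval nv mc C k (Sum.inr (c, g)) ≤ 0.5 := by
  rcases k with ⟨j, b⟩ | ⟨c', t⟩ <;> simp only [redmult, redval] <;> split_ifs <;> norm_num

theorem winsAtSecondPrice_inl (j : Fin nv) (b : Bool) :
    WinsAtSecondPrice (redval nv mc C) (redmult nv mc σ) (redprice nv mc σ)
      (Sum.inl (j, σ j)) (Sum.inl (j, b)) where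
  bid_le_price _ hk := redmult_mul_redval_inl_le_redprice C σ hk b
  exists_bid_eq_price := ⟨Sum.inl (j, !σ j), by simp, redmult_mul_redval_false_literal C σ j b⟩
  price_le_bid := by
    cases b <;> cases h : σ j <;> simp only [redmult, redval, redprice, h] <;> norm_num <;>
      rw [← mul_div_assoc] <;> gcongr <;> norm_num

theorem winsAtSecondPrice_inr_zero (c : Fin mc) (hc : ∃ t, (C c t).2 = σ (C c t).1) :
    WinsAtSecondPrice (redval nv mc C) (redmult nv mc σ) (redprice nv mc σ)
      (Sum.inr (c, 0)) (Sum.inr (c, 0)) where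
  bid_le_price k _ := redmult_mul_redval_inr_le_half C σ k c 0
  exists_bid_eq_price := by
    obtain ⟨t, ht⟩ := hc
    refine ⟨Sum.inl (C c t), by simp, ?_⟩
    simp only [redmult, redval, redprice, ← ht]
    norm_num
  price_le_bid := by norm_num [redmult, redval, redprice]

theorem winsAtSecondPrice_inr_one (c : Fin mc) {t : Fin 3} (ht : t ≠ 0) :
    WinsAtSecondPrice (redval nv mc C) (redmult nv mc σ) (redprice nv mc σ)
      (Sum.inr (c, t)) (Sum.inr (c, 1)) where
  bid_le_price k _ := redmult_mul_redval_inr_le_half C σ k c 1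
  exists_bid_eq_price := by
    fin_cases t
    · exact absurd rfl ht
    · exact ⟨Sum.inr (c, 2), by simp [Fin.ext_iff],
        by norm_num [redmult, redval, redprice, Fin.ext_iff]⟩
    · exact ⟨Sum.inr (c, 1), by simp [Fin.ext_iff],
        by norm_num [redmult, redval, redprice, Fin.ext_iff]⟩
  price_le_bid := by norm_num [redmult, redval, redprice, ht]

theorem winsAtSecondPrice_of_redalloc_pos (hσ : ∀ c, ∃ t, (C c t).2 = σ (C c t).1)
    {i : RedBidder nv mc} {g : RedGood nv mc} (h : 0 < redalloc nv mc σ i g) :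
    WinsAtSecondPrice (redval nv mc C) (redmult nv mc σ) (redprice nv mc σ) i g := by
  rcases i with ⟨j, b⟩ | ⟨c, t⟩ <;> rcases g with ⟨j', b'⟩ | ⟨c', g⟩ <;>
    simp only [redalloc, lt_self_iff_false] at h
  · split_ifs at h with hjb
    · obtain ⟨rfl, rfl⟩ := hjb
      exact winsAtSecondPrice_inl C σ j b'
    · exact absurd h (lt_irrefl 0)
  · split_ifs at h with hc ht hg hg <;> try exact absurd h (lt_irrefl 0)
    · subst hc ht hg
      exact winsAtSecondPrice_inr_zero C σ c (hσ c)
    · subst hc hg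
      exact winsAtSecondPrice_inr_one C σ c ht

theorem sum_redalloc_mul_redprice (i : RedBidder nv mc) :
    ∑ g, redalloc nv mc σ i g * redprice nv mc σ g =
      ∑ g, redalloc nv mc σ i g * redval nv mc C i g := by
  rcases i with ⟨j, b⟩ | ⟨c, t⟩
  · rw [Fintype.sum_sum_type, Fintype.sum_sum_type]
    congr 1
    · rw [Fintype.sum_prod_type, Fintype.sum_prod_type]
      refine Finset.sum_congr rfl fun j' _ => ?_
      by_cases hj : j = j'
      · subst hj
        cases h : σ j <;> cases b <;> simp [redalloc, redprice, redval, h] <;> ring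
      · simp [redalloc, hj]
    · simp [redalloc]
  · refine Finset.sum_congr rfl ?_
    rintro (_ | ⟨c', g⟩) -
    · simp [redalloc]
    · simp only [redalloc, redprice, redval]
      split_ifs <;> norm_num

theorem sum_redprice (hnv : 0 < nv) : ∑ g, redprice nv mc σ g = 0.075 + mc := by
  have hvar : ∀ j : Fin nv, ∑ b, redprice nv mc σ (Sum.inl (j, b)) = 0.075 / nv := by
    intro j
    cases h : σ j <;> simp [redprice, h] <;> ring
  have hclause : ∀ c : Fin mc, ∑ g, redprice nv mc σ (Sum.inr (c, g)) = 1 := by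
    intro c
    norm_num [Fin.sum_univ_two, redprice]
  rw [Fintype.sum_sum_type, Fintype.sum_prod_type, Fintype.sum_prod_type]
  simp only [hvar, hclause, Finset.sum_const, Finset.card_univ, Fintype.card_fin, nsmul_eq_mul]
  field_simp

theorem abEquilibrium_redalloc {A : ℝ} (hA : 5 ≤ A) (hσ : ∀ c, ∃ t, (C c t).2 = σ (C c t).1) :
    ABEquilibrium A (redval nv mc C) (redmult nv mc σ) (redalloc nv mc σ) (redprice nv mc σ) :=
  .of_winsAtSecondPrice (one_le_redmult σ) (fun i => (redmult_le_five σ i).trans hA)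
    (redalloc_nonneg σ) (redalloc_le_one σ) (sum_redalloc σ) (redprice_nonneg σ)
    (fun _ _ => winsAtSecondPrice_of_redalloc_pos C σ hσ) (sum_redalloc_mul_redprice C σ)

end Reduction

/-- if the 3SAT formula has a satisfying assignment `σ`, then with the
multipliers `redmult σ` the reduced market has an auto-bidding equilibrium in which each
true variable bidder wins both of its variable goods (at total price `0.075/n`), each clause
bidder `3^c` wins good `3^c` at price `0.5`, good `4^c` is priced at `0.5`, and total
revenue is exactly `0.075 + m`. -/
theorem stmt11 (nv mc : ℕ) (hnv : 0 < nv) (C : Fin mc → Fin 3 → Fin nv × Bool)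
    (A : ℝ) (hA : 5 ≤ A)
    (σ : Fin nv → Bool) (hσ : ∀ c, ∃ t, (C c t).2 = σ (C c t).1) :
    ∃ (x : RedBidder nv mc → RedGood nv mc → ℝ) (p : RedGood nv mc → ℝ),
      ABEquilibrium A (redval nv mc C) (redmult nv mc σ) x p ∧
      (∀ (j : Fin nv) (b' : Bool), x (Sum.inl (j, σ j)) (Sum.inl (j, b')) = 1) ∧
      (∀ j : Fin nv, p (Sum.inl (j, σ j)) + p (Sum.inl (j, !σ j)) = 0.075 / nv) ∧
      (∀ c : Fin mc, x (Sum.inr (c, 0)) (Sum.inr (c, 0)) = 1) ∧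
      (∀ c : Fin mc, p (Sum.inr (c, 0)) = 0.5 ∧ p (Sum.inr (c, 1)) = 0.5) ∧
      ∑ j, p j = 0.075 + (mc : ℝ) := by
  refine ⟨redalloc nv mc σ, redprice nv mc σ, abEquilibrium_redalloc C σ hA hσ,
    fun j b => by simp [redalloc], fun j => ?_, fun c => by simp [redalloc],
    fun c => ⟨rfl, rfl⟩, sum_redprice σ hnv⟩
  simp [redprice]
  ring
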